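/- Let H₁, H₂ be Hilbert spaces, {h_n}_{n∈ℕ} a sequence in H₁ satisfying the lower Riesz condition A ∑|c_n|² ≤ ‖∑ c_n h_n‖² for all finitely supported {c_n}, and {g_n}_{n∈ℕ} a Bessel sequence in H₂ with bound B. Then the map ∑ c_n h_n ↦ ∑ c_n g_n is well-defined and extends to a bounded linear operator U from the closed span of {h_n} to H₂ with ‖U‖ ≤ √(B/A). -/

import Mathlib

open scoped InnerProductSpace

theorem bounded_operator_between_sequences
    (H₁ H₂ : Type*) [NormedAddCommGroup H₁] [InnerProductSpace ℂ H₁] [CompleteSpace H₁]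
    [NormedAddCommGroup H₂] [InnerProductSpace ℂ H₂] [CompleteSpace H₂]
    (h : ℕ → H₁) (g : ℕ → H₂) (A B : ℝ) (hA : 0 < A)
    (hlower : ∀ c : ℕ →₀ ℂ,
      A * ∑ n ∈ c.support, ‖c n‖ ^ 2 ≤ ‖∑ n ∈ c.support, c n • h n‖ ^ 2)
    (hbessel : ∀ c : ℕ →₀ ℂ,
      ‖∑ n ∈ c.support, c n • g n‖ ^ 2 ≤ B * ∑ n ∈ c.support, ‖c n‖ ^ 2) :
    ∃ U : (Submodule.span ℂ (Set.range h)).topologicalClosure →L[ℂ] H₂,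
      ‖U‖ ≤ Real.sqrt (B / A) ∧
      ∀ n : ℕ, U ⟨h n, (Submodule.span ℂ (Set.range h)).le_topologicalClosure
        (Submodule.subset_span (Set.mem_range_self n))⟩ = g n := by
  classical
  set p := Submodule.span ℂ (Set.range h) with hp
  set S : (ℕ →₀ ℂ) →ₗ[ℂ] H₁ := Finsupp.linearCombination ℂ h with hS
  set G : (ℕ →₀ ℂ) →ₗ[ℂ] H₂ := Finsupp.linearCombination ℂ g with hG
  have hSsum : ∀ c : ℕ →₀ ℂ, S c = ∑ n ∈ c.support, c n • h n := fun c => by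
    rw [hS, Finsupp.linearCombination_apply, Finsupp.sum]
  have hGsum : ∀ c : ℕ →₀ ℂ, G c = ∑ n ∈ c.support, c n • g n := fun c => by
    rw [hG, Finsupp.linearCombination_apply, Finsupp.sum]
  -- injectivity of S
  have hinj : Function.Injective S := by
    rw [← LinearMap.ker_eq_bot, LinearMap.ker_eq_bot']
    intro c hc
    have h1 := hlower c
    rw [← hSsum c, hc, norm_zero] at h1
    have h2 : ∑ n ∈ c.support, ‖c n‖ ^ 2 ≤ 0 := by nlinarith
    have h3 : ∑ n ∈ c.support, ‖c n‖ ^ 2 = 0 :=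
      le_antisymm h2 (Finset.sum_nonneg fun n _ => by positivity)
    ext n
    by_cases hn : n ∈ c.support
    · have := (Finset.sum_eq_zero_iff_of_nonneg (fun n _ => by positivity)).mp h3 n hn
      simpa [pow_eq_zero_iff] using this
    · simpa using Finsupp.notMem_support_iff.mp hn
  have hrange : LinearMap.range S = p := Finsupp.range_linearCombination ℂ (v := h)
  -- the linear equivalence
  let e₁ : (ℕ →₀ ℂ) ≃ₗ[ℂ] p :=
    (LinearEquiv.ofInjective S hinj).trans (LinearEquiv.ofEq _ _ hrange)
  have he₁ : ∀ c : ℕ →₀ ℂ, (e₁ c : H₁) = S c := fun c => rfl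
  -- T : p →ₗ H₂
  let T : p →ₗ[ℂ] H₂ := G.comp e₁.symm.toLinearMap
  have hT : ∀ c : ℕ →₀ ℂ, T (e₁ c) = G c := fun c => by
    simp [T, LinearEquiv.symm_apply_apply]
  have hB : 0 ≤ B := by
    have := hbessel (Finsupp.single 0 1)
    have hsupp : (Finsupp.single (0:ℕ) (1:ℂ)).support = {0} := Finsupp.support_single_ne_zero _ one_ne_zero
    rw [hsupp] at this
    simp at this
    nlinarith [norm_nonneg (g 0), this]
  have hBA : 0 ≤ B / A := div_nonneg hB hA.le
  -- norm bound on T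
  have hbound : ∀ x : p, ‖T x‖ ≤ Real.sqrt (B / A) * ‖x‖ := by
    intro x
    set c := e₁.symm x with hc
    have hx : e₁ c = x := e₁.apply_symm_apply x
    have hxn : ‖(x : H₁)‖ = ‖S c‖ := by rw [← hx, he₁]
    have hTx : T x = G c := by rw [← hx, hT]
    have key : ‖T x‖ ^ 2 ≤ (B / A) * ‖(x : H₁)‖ ^ 2 := by
      rw [hTx, hxn]
      have h1 : ‖G c‖ ^ 2 ≤ B * ∑ n ∈ c.support, ‖c n‖ ^ 2 := by
        rw [hGsum]; exact hbessel c
      have h2 : A * ∑ n ∈ c.support, ‖c n‖ ^ 2 ≤ ‖S c‖ ^ 2 := by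
        rw [hSsum]; exact hlower c
      have h3 : ∑ n ∈ c.support, ‖c n‖ ^ 2 ≤ ‖S c‖ ^ 2 / A := by
        rw [le_div_iff₀ hA]; linarith
      calc ‖G c‖ ^ 2 ≤ B * ∑ n ∈ c.support, ‖c n‖ ^ 2 := h1
        _ ≤ B * (‖S c‖ ^ 2 / A) := mul_le_mul_of_nonneg_left h3 hB
        _ = (B / A) * ‖S c‖ ^ 2 := by ring
    have hxnorm : ‖x‖ = ‖(x : H₁)‖ := rfl
    rw [hxnorm]
    have := Real.sqrt_le_sqrt key
    rwa [Real.sqrt_sq (norm_nonneg _), Real.sqrt_mul hBA, Real.sqrt_sq (norm_nonneg _)] at this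
  let Tc : p →L[ℂ] H₂ := T.mkContinuous (Real.sqrt (B / A)) hbound
  -- inclusion p → closure p
  let einc : p →L[ℂ] p.topologicalClosure :=
    (Submodule.inclusion p.le_topologicalClosure).mkContinuous 1 (fun x => by
      rw [one_mul]; exact le_of_eq rfl)
  have heinc : ∀ x : p, (einc x : H₁) = (x : H₁) := fun x => rfl
  have hdense : DenseRange einc := by
    refine Topology.IsInducing.subtypeVal.dense_iff.2 fun x => ?_
    convert show (x : H₁) ∈ closure (p : Set H₁) from x.prop
    rw [← Set.range_comp]
    exact Set.ext fun y => ⟨by rintro ⟨y, rfl⟩; exact y.prop, fun hy => ⟨⟨y, hy⟩, rfl⟩⟩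
  have hnorm : ∀ x : p, ‖x‖ ≤ (1 : NNReal) * ‖einc x‖ := fun x => by
    rw [NNReal.coe_one, one_mul]; exact le_of_eq rfl
  have hiso := ContinuousLinearMap.isUniformEmbedding_of_bound einc hnorm
  refine ⟨Tc.extend einc, ?_, ?_⟩
  · have h1 := Tc.opNorm_extend_le (e := einc) hdense hnorm
    have h2 : ‖Tc‖ ≤ Real.sqrt (B / A) :=
      T.mkContinuous_norm_le (Real.sqrt_nonneg _) hbound
    calc ‖Tc.extend einc‖ ≤ 1 * ‖Tc‖ := by
          simpa using h1
      _ ≤ Real.sqrt (B / A) := by simpa using h2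
  · intro n
    have hmem : h n ∈ p := Submodule.subset_span (Set.mem_range_self n)
    have hx : (⟨h n, (Submodule.span ℂ (Set.range h)).le_topologicalClosure
        (Submodule.subset_span (Set.mem_range_self n))⟩ : p.topologicalClosure)
        = einc ⟨h n, hmem⟩ := rfl
    rw [hx, ContinuousLinearMap.extend_eq (h_dense := hdense) (h_e := hiso.isUniformInducing)]
    have : (⟨h n, hmem⟩ : p) = e₁ (Finsupp.single n 1) := by
      ext; rw [he₁]; simp [hS]
    show T _ = g n
    rw [this, hT]
    simp [hG]
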